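/- Let N ≥ 1 and σ ∈ C_N. Then σ avoids 132 if and only if either σ is the identity permutation, or there exists an integer y with ⌈N/2⌉ < y ≤ N such that: σ(i) = y−1+i for all 1 ≤ i ≤ N+1−y; σ(y−1+i) = i for all 1 ≤ i ≤ N+1−y; σ maps the interval {N+2−y, …, y−1} onto itself; and the permutation of S_{2y−2−N} order-isomorphic to σ(N+2−y), …, σ(y−1) is (empty or) a centrosymmetric permutation avoiding 132. -/

import Mathlib

/-!
Let `m` be the position of the maximum `N`. Avoiding 132 forces every entry before `m` to exceed
every entry after it, and centrosymmetry puts the entry `1` at position `N + 1 - m`; together these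
give `2 m ≤ N` unless `σ` is the identity. A descent inside the prefix would reflect to a 132
pattern starting at that `1`, so the prefix is increasing; lying above the `N - m` later entries,
it must be `N - m + 1, …, N`, and centrosymmetry makes the suffix `1, …, m`. What remains in
between is a centrosymmetric 132-avoider on the middle values. Conversely, a 132 pattern in a
permutation of this shape cannot meet the two increasing outer blocks, so it lives in the middle.
-/

/-- The value of the permutation `σ` of `{1,…,N}` (modeled on `Fin N`) at a
1-indexed position `i` (so `pval σ i ∈ {1,…,N}` for `1 ≤ i ≤ N`). -/
def pval {N : ℕ} (σ : Equiv.Perm (Fin N)) (i : ℕ) : ℕ :=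
  if h : i - 1 < N then ((σ ⟨i - 1, h⟩ : ℕ) + 1) else 0

/-- `σ` is centrosymmetric: `σ(i) + σ(N+1−i) = N+1` for all `1 ≤ i ≤ N`. -/
def IsCentro {N : ℕ} (σ : Equiv.Perm (Fin N)) : Prop :=
  ∀ i, 1 ≤ i → i ≤ N → pval σ i + pval σ (N + 1 - i) = N + 1

/-- `σ` avoids the pattern 132. -/
def Avoids132 {N : ℕ} (σ : Equiv.Perm (Fin N)) : Prop :=
  ¬ ∃ i j k, 1 ≤ i ∧ i < j ∧ j < k ∧ k ≤ N ∧
    pval σ i < pval σ k ∧ pval σ k < pval σ j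

/-- `σ` avoids the pattern 123. -/
def Avoids123 {N : ℕ} (σ : Equiv.Perm (Fin N)) : Prop :=
  ¬ ∃ i j k, 1 ≤ i ∧ i < j ∧ j < k ∧ k ≤ N ∧
    pval σ i < pval σ j ∧ pval σ j < pval σ k

/-- The number of descents of `σ`: positions `1 ≤ i ≤ N−1` with `σ(i) > σ(i+1)`. -/
noncomputable def des {N : ℕ} (σ : Equiv.Perm (Fin N)) : ℕ :=
  Nat.card {i : ℕ // 1 ≤ i ∧ i + 1 ≤ N ∧ pval σ (i + 1) < pval σ i}

section Pval

variable {N : ℕ} (σ : Equiv.Perm (Fin N))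

lemma pval_of_lt {i : ℕ} (h : i - 1 < N) : pval σ i = σ ⟨i - 1, h⟩ + 1 := dif_pos h

lemma pval_add_one (a : Fin N) : pval σ (a + 1) = σ a + 1 :=
  pval_of_lt σ (by simp)

lemma one_le_pval {i : ℕ} (h1 : 1 ≤ i) (h2 : i ≤ N) : 1 ≤ pval σ i := by
  rw [pval_of_lt σ (by omega)]
  omega

lemma pval_le {i : ℕ} (h1 : 1 ≤ i) (h2 : i ≤ N) : pval σ i ≤ N := by
  rw [pval_of_lt σ (by omega)]
  exact (σ _).isLt

lemma pval_injOn : Set.InjOn (pval σ) (Set.Icc 1 N) := by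
  rintro i ⟨hi1, hi2⟩ j ⟨hj1, hj2⟩ h
  rw [pval_of_lt σ (by omega : i - 1 < N), pval_of_lt σ (by omega : j - 1 < N)] at h
  have := Fin.mk.inj_iff.mp (σ.injective (Fin.ext (Nat.succ_injective h)))
  omega

lemma exists_pval_eq {v : ℕ} (h1 : 1 ≤ v) (h2 : v ≤ N) :
    ∃ p, 1 ≤ p ∧ p ≤ N ∧ pval σ p = v := by
  refine ⟨σ.symm ⟨v - 1, by omega⟩ + 1, by omega, (σ.symm _).isLt, ?_⟩
  rw [pval_add_one, σ.apply_symm_apply]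
  exact Nat.sub_add_cancel h1

lemma pval_add_sub_le_pval {a b : ℕ} (hab : a ≤ b)
    (hinc : ∀ i, a ≤ i → i < b → pval σ i < pval σ (i + 1)) :
    pval σ a + (b - a) ≤ pval σ b := by
  induction b, hab using Nat.le_induction with
  | base => simp
  | succ b hab ih =>
    have := ih fun i hi hib => hinc i hi (by omega)
    have := hinc b hab (by omega)
    omega

lemma card_le_of_forall_pval_lt {S : Finset ℕ} (hS : ∀ p ∈ S, 1 ≤ p ∧ p ≤ N) {v : ℕ}
    (hv : ∀ p ∈ S, pval σ p < v) : S.card ≤ v - 1 := by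
  calc S.card ≤ (Finset.Ico 1 v).card :=
        Finset.card_le_card_of_injOn (pval σ)
          (fun p hp => Finset.mem_Ico.mpr ⟨one_le_pval σ (hS p hp).1 (hS p hp).2, hv p hp⟩)
          ((pval_injOn σ).mono fun p hp => hS p hp)
    _ = v - 1 := Nat.card_Ico 1 v

lemma eq_one_of_pval_lt_pval_succ
    (hinc : ∀ i, 1 ≤ i → i < N → pval σ i < pval σ (i + 1)) : σ = 1 := by
  ext a
  have hlow := pval_add_sub_le_pval σ (b := a + 1) (by omega) fun i hi hia =>
    hinc i hi (by omega)
  have hup := pval_add_sub_le_pval σ a.isLt fun i hi hiN => hinc i (by omega) hiN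
  have := one_le_pval σ le_rfl (by omega : 1 ≤ N)
  have := pval_le σ (by omega : 1 ≤ N) le_rfl
  rw [pval_add_one] at hlow hup
  simp only [Equiv.Perm.one_apply]
  omega

end Pval

lemma avoids132_one (N : ℕ) : Avoids132 (1 : Equiv.Perm (Fin N)) := by
  have hone (p : ℕ) (h1 : 1 ≤ p) (h2 : p ≤ N) : pval (1 : Equiv.Perm (Fin N)) p = p := by
    rw [pval_of_lt _ (by omega : p - 1 < N)]
    exact Nat.sub_add_cancel h1
  rintro ⟨i, j, k, hi, hij, hjk, hkN, -, hkj⟩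
  rw [hone j (by omega) (by omega), hone k (by omega) hkN] at hkj
  omega

lemma IsCentro.pval_sub {N : ℕ} {σ : Equiv.Perm (Fin N)} (hσ : IsCentro σ) {i : ℕ}
    (h1 : 1 ≤ i) (h2 : i ≤ N) : pval σ (N + 1 - i) = N + 1 - pval σ i := by
  have := hσ i h1 h2
  omega

namespace Avoids132

variable {N : ℕ} {σ : Equiv.Perm (Fin N)}

lemma eq_one_of_pval_one (hav : Avoids132 σ) (h1 : pval σ 1 = 1) : σ = 1 := by
  refine eq_one_of_pval_lt_pval_succ σ fun i hi hiN => ?_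
  by_contra! hle
  have hne : pval σ (i + 1) ≠ pval σ i :=
    (pval_injOn σ).ne ⟨by omega, by omega⟩ ⟨hi, hiN.le⟩ (by omega)
  have hne1 : pval σ (i + 1) ≠ pval σ 1 :=
    (pval_injOn σ).ne ⟨by omega, by omega⟩ ⟨le_rfl, by omega⟩ (by omega)
  have := one_le_pval σ (i := i + 1) (by omega) (by omega)
  obtain rfl | hi := hi.eq_or_lt
  · omega
  · exact hav ⟨1, i, i + 1, le_rfl, hi, by omega, hiN, by omega, by omega⟩

lemma pval_lt_of_le_of_lt (hav : Avoids132 σ) {m i k : ℕ} (hmN : pval σ m = N) (hi : 1 ≤ i)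
    (him : i ≤ m) (hmk : m < k) (hk : k ≤ N) : pval σ k < pval σ i := by
  have hkm : pval σ k ≠ pval σ m :=
    (pval_injOn σ).ne ⟨by omega, hk⟩ ⟨by omega, by omega⟩ (by omega)
  have := pval_le σ (by omega) hk
  obtain rfl | him := him.eq_or_lt
  · omega
  by_contra! hik
  have hne : pval σ i ≠ pval σ k :=
    (pval_injOn σ).ne ⟨hi, by omega⟩ ⟨by omega, hk⟩ (by omega)
  exact hav ⟨i, m, k, hi, him, hmk, hk, by omega, by omega⟩

lemma two_mul_le (hav : Avoids132 σ) (hσ : IsCentro σ) (hne : σ ≠ 1) {m : ℕ} (hm1 : 1 ≤ m)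
    (hm2 : m ≤ N) (hmN : pval σ m = N) : 2 * m ≤ N := by
  by_contra! hlt
  have h1 : pval σ (N + 1 - m) = 1 := by rw [hσ.pval_sub hm1 hm2, hmN]; omega
  obtain rfl | hmN' := hm2.eq_or_lt
  · exact hne (hav.eq_one_of_pval_one (by simpa using h1))
  · have := hav.pval_lt_of_le_of_lt hmN (i := N + 1 - m) (k := N) (by omega) (by omega)
      hmN' le_rfl
    have := one_le_pval σ (i := N) (by omega) le_rfl
    omega

variable {m : ℕ}

lemma pval_lt_pval_succ (hav : Avoids132 σ) (hσ : IsCentro σ) (hmN : pval σ m = N)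
    (h2m : 2 * m ≤ N) {i : ℕ} (hi : 1 ≤ i) (him : i < m) : pval σ i < pval σ (i + 1) := by
  have hne : pval σ i ≠ pval σ m :=
    (pval_injOn σ).ne ⟨hi, by omega⟩ ⟨by omega, by omega⟩ (by omega)
  have := pval_le σ hi (by omega)
  obtain heq | hlt := (show i + 1 = m ∨ i + 1 < m by omega)
  · rw [heq]
    omega
  by_contra! hle
  have hne' : pval σ (i + 1) ≠ pval σ i :=
    (pval_injOn σ).ne ⟨by omega, by omega⟩ ⟨hi, by omega⟩ (by omega)
  have := one_le_pval σ (i := i + 1) (by omega) (by omega)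
  have := hσ.pval_sub (i := m) (by omega) (by omega)
  have := hσ.pval_sub hi (by omega)
  have := hσ.pval_sub (i := i + 1) (by omega) (by omega)
  -- reflecting the descent through the centre gives a 132 pattern starting at the entry `1`
  exact hav ⟨N + 1 - m, N + 1 - (i + 1), N + 1 - i, by omega, by omega, by omega, by omega,
    by omega, by omega⟩

lemma pval_eq_sub_add (hav : Avoids132 σ) (hσ : IsCentro σ) (hmN : pval σ m = N)
    (h2m : 2 * m ≤ N) {i : ℕ} (hi : 1 ≤ i) (him : i ≤ m) : pval σ i = N - m + i := by
  have hinc := fun j hj hjm => hav.pval_lt_pval_succ hσ hmN h2m (i := j) hj hjm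
  have hcard := card_le_of_forall_pval_lt σ (S := Finset.Ioc m N) (v := pval σ 1)
    (fun p hp => by rw [Finset.mem_Ioc] at hp; omega)
    (fun p hp => by
      rw [Finset.mem_Ioc] at hp
      exact hav.pval_lt_of_le_of_lt hmN le_rfl (by omega) hp.1 hp.2)
  rw [Nat.card_Ioc] at hcard
  have := pval_add_sub_le_pval σ hi fun j hj hji => hinc j hj (by omega)
  have := pval_add_sub_le_pval σ him fun j hj hjm => hinc j (by omega) hjm
  omega

lemma pval_sub_add_eq (hav : Avoids132 σ) (hσ : IsCentro σ) (hmN : pval σ m = N)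
    (h2m : 2 * m ≤ N) {i : ℕ} (hi : 1 ≤ i) (him : i ≤ m) : pval σ (N - m + i) = i := by
  have := hσ.pval_sub (i := m + 1 - i) (by omega) (by omega)
  rw [show N + 1 - (m + 1 - i) = N - m + i by omega] at this
  have := hav.pval_eq_sub_add hσ hmN h2m (i := m + 1 - i) (by omega) (by omega)
  omega

lemma pval_mem_middle (hav : Avoids132 σ) (hσ : IsCentro σ) (hmN : pval σ m = N)
    (h2m : 2 * m ≤ N) {p : ℕ} (hp1 : m < p) (hp2 : p ≤ N - m) :
    m < pval σ p ∧ pval σ p ≤ N - m := by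
  have := one_le_pval σ (i := p) (by omega) (by omega)
  have := pval_le σ (i := p) (by omega) (by omega)
  constructor
  · by_contra! h
    have hq := hav.pval_sub_add_eq hσ hmN h2m (i := pval σ p) (by omega) h
    have := pval_injOn σ ⟨by omega, by omega⟩ ⟨by omega, by omega⟩ hq
    omega
  · by_contra! h
    have hq := hav.pval_eq_sub_add hσ hmN h2m (i := pval σ p - (N - m)) (by omega) (by omega)
    have := pval_injOn σ ⟨by omega, by omega⟩ ⟨by omega, by omega⟩
      (show pval σ (pval σ p - (N - m)) = pval σ p by omega)
    omega

end Avoids132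

section Block

variable {N n s : ℕ} {σ : Equiv.Perm (Fin N)} {τ : Equiv.Perm (Fin n)}

lemma exists_perm_val_add_eq (hs : 1 ≤ s) (hsn : s + n ≤ N + 1)
    (hmaps : ∀ a < n, s ≤ pval σ (s + a) ∧ pval σ (s + a) < s + n) :
    ∃ τ : Equiv.Perm (Fin n), ∀ a : Fin n, (τ a : ℕ) + s = pval σ (s + a) := by
  let g : Fin n → Fin n := fun a => ⟨pval σ (s + a) - s, by have := hmaps a a.isLt; omega⟩
  have hg : g.Injective := by
    intro a b hab
    have hab := Fin.mk.inj_iff.mp hab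
    have := hmaps a a.isLt
    have := hmaps b b.isLt
    have := pval_injOn σ ⟨by omega, by omega⟩ ⟨by omega, by omega⟩
      (show pval σ (s + a) = pval σ (s + b) by omega)
    exact Fin.ext (by omega)
  refine ⟨Equiv.ofBijective g (Finite.injective_iff_bijective.mp hg), fun a => ?_⟩
  have := hmaps a a.isLt
  simp only [Equiv.ofBijective_apply, g]
  omega

lemma IsCentro.of_val_add_eq (hσ : IsCentro σ) (hs : 1 ≤ s) (hN : N + 2 = 2 * s + n)
    (hτ : ∀ a : Fin n, (τ a : ℕ) + s = pval σ (s + a)) : IsCentro τ := by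
  intro i hi1 hi2
  have e1 := hτ ⟨i - 1, by omega⟩
  have e2 := hτ ⟨n + 1 - i - 1, by omega⟩
  have e3 := hσ (s + (i - 1)) (by omega) (by omega)
  rw [show N + 1 - (s + (i - 1)) = s + (n + 1 - i - 1) by omega] at e3
  rw [pval_of_lt τ (by omega : i - 1 < n), pval_of_lt τ (by omega : n + 1 - i - 1 < n)]
  simp only at e1 e2
  omega

lemma pval_lt_pval_iff_of_orderIso
    (hiso : ∀ a b : Fin n, τ a < τ b ↔ pval σ (s + a) < pval σ (s + b)) {a b : ℕ}
    (ha : a < n) (hb : b < n) :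
    pval τ (a + 1) < pval τ (b + 1) ↔ pval σ (s + a) < pval σ (s + b) := by
  rw [pval_add_one τ ⟨a, ha⟩, pval_add_one τ ⟨b, hb⟩, add_lt_add_iff_right]
  exact hiso ⟨a, ha⟩ ⟨b, hb⟩

lemma Avoids132.of_orderIso (hav : Avoids132 σ) (hsn : s + n ≤ N + 1) (hs : 1 ≤ s)
    (hiso : ∀ a b : Fin n, τ a < τ b ↔ pval σ (s + a) < pval σ (s + b)) : Avoids132 τ := by
  rintro ⟨i, j, k, hi, hij, hjk, hkn, hik, hkj⟩
  obtain ⟨i, rfl⟩ := Nat.exists_eq_add_of_le' hi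
  obtain ⟨j, rfl⟩ := Nat.exists_eq_add_of_le' (hi.trans hij.le)
  obtain ⟨k, rfl⟩ := Nat.exists_eq_add_of_le' (hi.trans (hij.trans hjk).le)
  rw [pval_lt_pval_iff_of_orderIso hiso (by omega) (by omega)] at hik hkj
  exact hav ⟨s + i, s + j, s + k, by omega, by omega, by omega, by omega, hik, hkj⟩

end Block

lemma Avoids132.exists_block_form {N : ℕ} {σ : Equiv.Perm (Fin N)} (hav : Avoids132 σ)
    (hσ : IsCentro σ) (hne : σ ≠ 1) :
    ∃ y, (N + 1) / 2 < y ∧ y ≤ N ∧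
        (∀ i, 1 ≤ i → i ≤ N + 1 - y → pval σ i = y - 1 + i) ∧
        (∀ i, 1 ≤ i → i ≤ N + 1 - y → pval σ (y - 1 + i) = i) ∧
        ((Finset.Icc (N + 2 - y) (y - 1)).image (pval σ) = Finset.Icc (N + 2 - y) (y - 1)) ∧
        (∃ τ : Equiv.Perm (Fin (2 * y - 2 - N)),
          (∀ a b : Fin (2 * y - 2 - N),
            τ a < τ b ↔ pval σ (N + 2 - y + (a : ℕ)) < pval σ (N + 2 - y + (b : ℕ))) ∧
          IsCentro τ ∧ Avoids132 τ) := by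
  have hN : 1 ≤ N := Nat.pos_of_ne_zero fun h => hne (by subst h; exact Subsingleton.elim σ 1)
  obtain ⟨m, hm1, hm2, hmN⟩ := exists_pval_eq σ hN le_rfl
  have h2m := hav.two_mul_le hσ hne hm1 hm2 hmN
  have hmid := fun p (hp1 : m < p) (hp2 : p ≤ N - m) => hav.pval_mem_middle hσ hmN h2m hp1 hp2
  obtain ⟨τ, hτ⟩ :=
    exists_perm_val_add_eq (σ := σ) (s := m + 1) (n := N - 2 * m) (by omega) (by omega)
    fun a ha => by have := hmid (m + 1 + a) (by omega) (by omega); omega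
  have hiso (a b : Fin (N - 2 * m)) :
      τ a < τ b ↔ pval σ (m + 1 + a) < pval σ (m + 1 + b) := by
    rw [Fin.lt_def, ← hτ a, ← hτ b]
    omega
  refine ⟨N + 1 - m, by omega, by omega, fun i hi1 hi2 => ?_, fun i hi1 hi2 => ?_, ?_, ?_⟩
  · rw [hav.pval_eq_sub_add hσ hmN h2m hi1 (by omega)]
    omega
  · rw [show N + 1 - m - 1 + i = N - m + i by omega]
    exact hav.pval_sub_add_eq hσ hmN h2m hi1 (by omega)
  · rw [show N + 2 - (N + 1 - m) = m + 1 by omega, show N + 1 - m - 1 = N - m by omega]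
    refine Finset.eq_of_subset_of_card_le (Finset.image_subset_iff.mpr fun p hp => ?_)
      (Finset.card_image_of_injOn ((pval_injOn σ).mono fun p hp => ?_)).ge
    · rw [Finset.mem_Icc] at hp ⊢
      have := hmid p (by omega) hp.2
      omega
    · rw [Finset.coe_Icc, Set.mem_Icc] at hp
      exact ⟨by omega, by omega⟩
  · rw [show 2 * (N + 1 - m) - 2 - N = N - 2 * m by omega,
      show N + 2 - (N + 1 - m) = m + 1 by omega]
    exact ⟨τ, hiso, hσ.of_val_add_eq (by omega) (by omega) hτ,
      hav.of_orderIso (by omega) (by omega) hiso⟩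

section BlockForm

variable {N y : ℕ} {σ : Equiv.Perm (Fin N)}

lemma pval_cases_of_block_form
    (hL : ∀ i, 1 ≤ i → i ≤ N + 1 - y → pval σ i = y - 1 + i)
    (hR : ∀ i, 1 ≤ i → i ≤ N + 1 - y → pval σ (y - 1 + i) = i)
    (hM : (Finset.Icc (N + 2 - y) (y - 1)).image (pval σ) = Finset.Icc (N + 2 - y) (y - 1))
    {p : ℕ} (hp1 : 1 ≤ p) (hp2 : p ≤ N) :
    (p ≤ N + 1 - y ∧ pval σ p = y - 1 + p) ∨
      (N + 2 - y ≤ p ∧ p ≤ y - 1 ∧ N + 2 - y ≤ pval σ p ∧ pval σ p ≤ y - 1) ∨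
      (y ≤ p ∧ pval σ p + y = p + 1) := by
  rcases le_or_gt p (N + 1 - y) with hpL | hpL
  · exact .inl ⟨hpL, hL p hp1 hpL⟩
  rcases lt_or_ge p y with hpM | hpR
  · have hmem := Finset.mem_Icc.mp (hM ▸ Finset.mem_image_of_mem (pval σ)
      (Finset.mem_Icc.mpr ⟨(by omega : N + 2 - y ≤ p), (by omega : p ≤ y - 1)⟩))
    exact .inr (.inl ⟨by omega, by omega, hmem⟩)
  · have := hR (p + 1 - y) (by omega) (by omega)
    rw [show y - 1 + (p + 1 - y) = p by omega] at this
    exact .inr (.inr ⟨hpR, by omega⟩)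

lemma avoids132_of_block_form (hy : (N + 1) / 2 < y)
    (hL : ∀ i, 1 ≤ i → i ≤ N + 1 - y → pval σ i = y - 1 + i)
    (hR : ∀ i, 1 ≤ i → i ≤ N + 1 - y → pval σ (y - 1 + i) = i)
    (hM : (Finset.Icc (N + 2 - y) (y - 1)).image (pval σ) = Finset.Icc (N + 2 - y) (y - 1))
    {τ : Equiv.Perm (Fin (2 * y - 2 - N))}
    (hiso : ∀ a b : Fin (2 * y - 2 - N),
      τ a < τ b ↔ pval σ (N + 2 - y + (a : ℕ)) < pval σ (N + 2 - y + (b : ℕ)))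
    (hτ : Avoids132 τ) : Avoids132 σ := by
  rintro ⟨i, j, k, hi, hij, hjk, hkN, hik, hkj⟩
  have hcases := fun p hp1 hp2 => pval_cases_of_block_form (p := p) hL hR hM hp1 hp2
  -- the outer blocks are increasing and lie above resp. below the middle one, so only a pattern
  -- inside the middle block survives the case split
  rcases hcases i hi (by omega) with ⟨_, _⟩ | ⟨hi1, _⟩ | ⟨_, _⟩ <;>
    rcases hcases j (by omega) (by omega) with ⟨_, _⟩ | ⟨hj1, _⟩ | ⟨_, _⟩ <;>
    rcases hcases k (by omega) hkN with ⟨_, _⟩ | ⟨hk1, _⟩ | ⟨_, _⟩ <;>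
    try omega
  obtain ⟨a, rfl⟩ := Nat.exists_eq_add_of_le hi1
  obtain ⟨b, rfl⟩ := Nat.exists_eq_add_of_le hj1
  obtain ⟨c, rfl⟩ := Nat.exists_eq_add_of_le hk1
  rw [← pval_lt_pval_iff_of_orderIso hiso (by omega) (by omega)] at hik hkj
  exact hτ ⟨a + 1, b + 1, c + 1, by omega, by omega, by omega, by omega, hik, hkj⟩

end BlockForm

theorem stmt16_general (N : ℕ) (σ : Equiv.Perm (Fin N)) (hσ : IsCentro σ) :
    Avoids132 σ ↔
      σ = 1 ∨
      ∃ y, (N + 1) / 2 < y ∧ y ≤ N ∧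
        (∀ i, 1 ≤ i → i ≤ N + 1 - y → pval σ i = y - 1 + i) ∧
        (∀ i, 1 ≤ i → i ≤ N + 1 - y → pval σ (y - 1 + i) = i) ∧
        ((Finset.Icc (N + 2 - y) (y - 1)).image (pval σ) = Finset.Icc (N + 2 - y) (y - 1)) ∧
        (∃ τ : Equiv.Perm (Fin (2 * y - 2 - N)),
          (∀ a b : Fin (2 * y - 2 - N),
            τ a < τ b ↔ pval σ (N + 2 - y + (a : ℕ)) < pval σ (N + 2 - y + (b : ℕ))) ∧
          IsCentro τ ∧ Avoids132 τ) := by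
  constructor
  · intro hav
    by_cases hne : σ = 1
    · exact .inl hne
    · exact .inr (hav.exists_block_form hσ hne)
  · rintro (rfl | ⟨y, hy, -, hL, hR, hM, τ, hiso, -, hτ⟩)
    · exact avoids132_one N
    · exact avoids132_of_block_form hy hL hR hM hiso hτ

/-- a centrosymmetric `σ ∈ S_N` avoids 132 iff it is the identity or it
has the form `y y+1 … N β 1 2 … N+1−y` with `⌈N/2⌉ < y ≤ N`, where `β` occupies the
middle interval `{N+2−y,…,y−1}` and is order-isomorphic to a (possibly empty)
centrosymmetric 132-avoiding permutation of `S_{2y−2−N}`. -/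
theorem stmt16 (N : ℕ) (hN : 1 ≤ N) (σ : Equiv.Perm (Fin N)) (hσ : IsCentro σ) :
    Avoids132 σ ↔
      σ = 1 ∨
      ∃ y, (N + 1) / 2 < y ∧ y ≤ N ∧
        (∀ i, 1 ≤ i → i ≤ N + 1 - y → pval σ i = y - 1 + i) ∧
        (∀ i, 1 ≤ i → i ≤ N + 1 - y → pval σ (y - 1 + i) = i) ∧
        ((Finset.Icc (N + 2 - y) (y - 1)).image (pval σ) = Finset.Icc (N + 2 - y) (y - 1)) ∧
        (∃ τ : Equiv.Perm (Fin (2 * y - 2 - N)),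
          (∀ a b : Fin (2 * y - 2 - N),
            τ a < τ b ↔ pval σ (N + 2 - y + (a : ℕ)) < pval σ (N + 2 - y + (b : ℕ))) ∧
          IsCentro τ ∧ Avoids132 τ) :=
  stmt16_general N σ hσ
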